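/- Let 1 ≤ k ≤ n, t ∈ ℂ, and let x ∈ ℂ satisfy x ∉ {t, t+1, …, t+k−1}. Then, labelling the tensor factors of (ℂⁿ)^{⊗(k+1)} by 0, 1, …, k, one has R̄₀₁(t+k−1−x) R̄₀₂(t+k−2−x) ⋯ R̄₀k(t−x) ∘ (1 ⊗ A_k) = (1 + (P̄₀₁ + ⋯ + P̄₀k)(x−t)⁻¹) ∘ (1 ⊗ A_k) as operators on (ℂⁿ)^{⊗(k+1)}; that is, the two operators agree on ℂⁿ ⊗ Λ^k(ℂⁿ). -/

import Mathlib

noncomputable section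
open scoped Kronecker
open Matrix

/-- Square matrices acting on the tensor power `(ℂⁿ)^{⊗ι}`, modelled on the
function basis `ι → Fin n`. -/
abbrev TMat (ι : Type) (n : ℕ) := Matrix (ι → Fin n) (ι → Fin n) ℂ

/-- The matrix units `E_{ij}` of `End(ℂⁿ)`. -/
def matE (n : ℕ) (i j : Fin n) : Matrix (Fin n) (Fin n) ℂ := Matrix.single i j 1

/-- The flip `P = Σ E_{ij} ⊗ E_{ji}` on `ℂⁿ ⊗ ℂⁿ`. -/
def flipP (n : ℕ) : Matrix (Fin n × Fin n) (Fin n × Fin n) ℂ :=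
  ∑ i : Fin n, ∑ j : Fin n, matE n i j ⊗ₖ matE n j i

/-- `P̄ = Σ E_{ij} ⊗ E_{ij}` on `ℂⁿ ⊗ ℂⁿ`. -/
def PbarM (n : ℕ) : Matrix (Fin n × Fin n) (Fin n × Fin n) ℂ :=
  ∑ i : Fin n, ∑ j : Fin n, matE n i j ⊗ₖ matE n i j

/-- The conjugate `X̃ = G⁻¹ Xᵀ G` of `X` relative to the bilinear form with
Gram matrix `G`, i.e. `⟨X u, v⟩ = ⟨u, X̃ v⟩` where `⟨u, v⟩ = uᵀ G v`. -/
def conjF {n : ℕ} (G X : Matrix (Fin n) (Fin n) ℂ) : Matrix (Fin n) (Fin n) ℂ :=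
  G⁻¹ * Xᵀ * G

/-- `P̃ = Σ Ẽ_{ij} ⊗ E_{ji}`. -/
def PtilM (n : ℕ) (G : Matrix (Fin n) (Fin n) ℂ) : Matrix (Fin n × Fin n) (Fin n × Fin n) ℂ :=
  ∑ i : Fin n, ∑ j : Fin n, conjF G (matE n i j) ⊗ₖ matE n j i

/-- `P̂ = Σ Ẽ_{ij} ⊗ E_{ij}`. -/
def PhatM (n : ℕ) (G : Matrix (Fin n) (Fin n) ℂ) : Matrix (Fin n × Fin n) (Fin n × Fin n) ℂ :=
  ∑ i : Fin n, ∑ j : Fin n, conjF G (matE n i j) ⊗ₖ matE n i j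

/-- The Yang R-matrix `R(x) = 1 − P x⁻¹`. -/
def Rm (n : ℕ) (x : ℂ) : Matrix (Fin n × Fin n) (Fin n × Fin n) ℂ := 1 - x⁻¹ • flipP n

/-- `R̄(x) = 1 − P̄ x⁻¹`. -/
def RbarM (n : ℕ) (x : ℂ) : Matrix (Fin n × Fin n) (Fin n × Fin n) ℂ := 1 - x⁻¹ • PbarM n

/-- `R̃(x) = 1 − P̃ x⁻¹`. -/
def RtilM (n : ℕ) (G : Matrix (Fin n) (Fin n) ℂ) (x : ℂ) :
    Matrix (Fin n × Fin n) (Fin n × Fin n) ℂ := 1 - x⁻¹ • PtilM n G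

/-- `R̂(x) = 1 − P̂ x⁻¹`. -/
def RhatM (n : ℕ) (G : Matrix (Fin n) (Fin n) ℂ) (x : ℂ) :
    Matrix (Fin n × Fin n) (Fin n × Fin n) ℂ := 1 - x⁻¹ • PhatM n G

/-- `Z_{ij}` : the operator on a tensor power of `ℂⁿ` acting as the two-factor
operator `Z` in the `i`-th and `j`-th tensor factors and as the identity elsewhere. -/
def lift2 {n : ℕ} {ι : Type} [Fintype ι] [DecidableEq ι] (i j : ι)
    (Z : Matrix (Fin n × Fin n) (Fin n × Fin n) ℂ) : TMat ι n :=
  fun f g => Z (f i, f j) (g i, g j) *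
    ∏ p : ι, if p = i ∨ p = j then 1 else (if f p = g p then 1 else 0)

/-- The operator `P_σ` permuting the tensor factors of `(ℂⁿ)^{⊗k}` according to `σ`. -/
def permMat (n k : ℕ) (σ : Equiv.Perm (Fin k)) : TMat (Fin k) n :=
  fun f g => if f ∘ σ = g then 1 else 0

/-- The normalized antisymmetrizer `A_k = (1/k!) Σ_σ sgn(σ) P_σ` on `(ℂⁿ)^{⊗k}`. -/
def antisym (n k : ℕ) : TMat (Fin k) n :=
  (k.factorial : ℂ)⁻¹ • ∑ σ : Equiv.Perm (Fin k), (((Equiv.Perm.sign σ : ℤ) : ℂ)) • permMat n k σ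

/-- Extend an operator on `(ℂⁿ)^{⊗k}` to `(ℂⁿ)^{⊗(k+1)}`, acting as the
identity in the `0`-th factor. -/
def oneT (n k : ℕ) (M : TMat (Fin k) n) : TMat (Fin (k + 1)) n :=
  fun f g => (if f 0 = g 0 then 1 else 0) * M (fun p => f p.succ) (fun p => g p.succ)

/-! Write `Q_a = P̄_{0a}` and `A = 1 ⊗ A_k`. The Brauer relation `P̄_{0a} P̄_{0b} = P̄_{0a} P_{ab}`
together with `P_{ab} A = -A` gives `Q_a Q_b A = -Q_a A` for `a ≠ b`. Expanding the product from
the right, the factor `1 - (t + d - x)⁻¹ Q` meets `d` later `Q`'s, so it contributes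
`-(t + d - x)⁻¹ (1 - d (x - t)⁻¹) = (x - t)⁻¹` to the coefficient of `Q A`. -/

open Function

section Lift2

variable {n : ℕ} {ι : Type} [Fintype ι] [DecidableEq ι] {i j : ι}

omit [Fintype ι] in
theorem eq_update_update_iff (hij : i ≠ j) (f h : ι → Fin n) (c d : Fin n) :
    h = update (update f i c) j d ↔ c = h i ∧ d = h j ∧ ∀ p, ¬(p = i ∨ p = j) → f p = h p := by
  constructor
  · rintro rfl
    refine ⟨by simp [hij], by simp, fun p hp => ?_⟩
    push Not at hp
    simp [hp.1, hp.2]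
  · rintro ⟨rfl, rfl, hfh⟩
    funext p
    by_cases hp : p = i ∨ p = j
    · rcases hp with rfl | rfl <;> simp [hij]
    · push Not at hp
      simp [hp.1, hp.2, hfh p (by tauto)]

theorem lift2_apply_eq_ite (Z : Matrix (Fin n × Fin n) (Fin n × Fin n) ℂ) (f h : ι → Fin n) :
    lift2 i j Z f h
      = if ∀ p, ¬(p = i ∨ p = j) → f p = h p then Z (f i, f j) (h i, h j) else 0 := by
  have hprod : (∏ p, if p = i ∨ p = j then (1 : ℂ) else if f p = h p then 1 else 0)
      = ∏ p, if ¬(p = i ∨ p = j) → f p = h p then 1 else 0 :=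
    Finset.prod_congr rfl fun p _ => by split_ifs <;> tauto
  rw [lift2, hprod, Fintype.prod_boole, mul_ite, mul_one, mul_zero]

theorem lift2_mul_apply (hij : i ≠ j) (Z : Matrix (Fin n × Fin n) (Fin n × Fin n) ℂ)
    (X : TMat ι n) (f g : ι → Fin n) :
    (lift2 i j Z * X) f g
      = ∑ c, ∑ d, Z (f i, f j) (c, d) * X (update (update f i c) j d) g := by
  have hsum : ∀ h : ι → Fin n, lift2 i j Z f h * X h g
      = ∑ c, ∑ d, if h = update (update f i c) j d then Z (f i, f j) (c, d) * X h g else 0 := by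
    intro h
    simp only [lift2_apply_eq_ite, ite_mul, zero_mul, eq_update_update_iff hij, ite_and,
      Finset.sum_ite_irrel, Finset.sum_ite_eq', Finset.mem_univ, if_true, Finset.sum_const_zero]
  rw [Matrix.mul_apply, Finset.sum_congr rfl fun h _ => hsum h, Finset.sum_comm]
  refine Finset.sum_congr rfl fun c _ => ?_
  rw [Finset.sum_comm]
  simp only [Finset.sum_ite_eq', Finset.mem_univ, if_true]

theorem lift2_one (hij : i ≠ j) : lift2 i j (1 : Matrix (Fin n × Fin n) (Fin n × Fin n) ℂ) = 1 := by
  ext f g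
  rw [← mul_one (lift2 i j 1), lift2_mul_apply hij]
  simp only [Matrix.one_apply, Prod.mk.injEq, ite_and, ite_mul, one_mul, zero_mul]
  simp

theorem lift2_sub (Z W : Matrix (Fin n × Fin n) (Fin n × Fin n) ℂ) :
    lift2 i j (Z - W) = lift2 i j Z - lift2 i j W := by
  ext f g
  simp [lift2, sub_mul]

theorem lift2_smul (c : ℂ) (Z : Matrix (Fin n × Fin n) (Fin n × Fin n) ℂ) :
    lift2 i j (c • Z) = c • lift2 i j Z := by
  ext f g
  simp [lift2, mul_assoc]

theorem lift2_RbarM (hij : i ≠ j) (c : ℂ) :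
    lift2 i j (RbarM n c) = 1 - c⁻¹ • lift2 i j (PbarM n) := by
  rw [RbarM, lift2_sub, lift2_smul, lift2_one hij]

theorem PbarM_apply (a b c d : Fin n) :
    PbarM n (a, b) (c, d) = if a = b ∧ c = d then 1 else 0 := by
  simp only [PbarM, matE, Matrix.sum_apply, kroneckerMap_apply, single_apply, ite_and, ite_mul,
    one_mul, zero_mul]
  simp [Finset.sum_ite_eq']

theorem lift2_PbarM_mul_apply (hij : i ≠ j) (X : TMat ι n) (f g : ι → Fin n) :
    (lift2 i j (PbarM n) * X) f g
      = if f i = f j then ∑ c, X (update (update f i c) j c) g else 0 := by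
  simp only [lift2_mul_apply hij, PbarM_apply, ite_and, ite_mul, one_mul, zero_mul,
    Finset.sum_ite_irrel, Finset.sum_ite_eq, Finset.mem_univ, if_true, Finset.sum_const_zero]

end Lift2

section Antisymmetrizer

variable {n k : ℕ}

theorem antisym_apply_comp (τ : Equiv.Perm (Fin k)) (h g : Fin k → Fin n) :
    antisym n k (h ∘ τ) g = ((Equiv.Perm.sign τ : ℤ) : ℂ) * antisym n k h g := by
  simp only [antisym, Matrix.smul_apply, Matrix.sum_apply, smul_eq_mul, Finset.mul_sum]
  rw [← Equiv.sum_comp (Equiv.mulLeft τ⁻¹)]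
  refine Finset.sum_congr rfl fun σ _ => ?_
  have hperm : (h ∘ τ) ∘ ⇑(τ⁻¹ * σ) = h ∘ σ := by
    funext p; simp
  simp only [Equiv.coe_mulLeft, permMat, hperm, map_mul, Equiv.Perm.sign_inv, Units.val_mul,
    Int.cast_mul]
  ring

theorem antisym_apply_comp_swap {a b : Fin k} (hab : a ≠ b) (h g : Fin k → Fin n) :
    antisym n k (h ∘ Equiv.swap a b) g = -antisym n k h g := by
  simp [antisym_apply_comp, Equiv.Perm.sign_swap hab]

theorem update_update_comp_succ {α : Type*} (h : Fin (k + 1) → α) (a : Fin k) (c d : α) :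
    (fun p => update (update h 0 c) a.succ d p.succ) = update (fun p => h p.succ) a d := by
  funext p
  by_cases hp : p = a
  · simp [hp]
  · simp [hp, Fin.succ_ne_zero]

theorem update_update_eq_update_comp_swap {α β : Type*} [DecidableEq α] (f : α → β) {a b : α}
    (hab : a ≠ b) (v : β) :
    update (update f a (f b)) b v = update f a v ∘ Equiv.swap a b := by
  rw [Equiv.comp_swap_eq_update, update_self, update_of_ne hab.symm, update_comm hab.symm,
    update_idem]

theorem lift2_PbarM_mul_oneT_apply (M : TMat (Fin k) n) (a : Fin k) (h g : Fin (k + 1) → Fin n) :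
    (lift2 0 a.succ (PbarM n) * oneT n k M) h g
      = if h 0 = h a.succ then M (update (fun p => h p.succ) a (g 0)) (fun p => g p.succ)
        else 0 := by
  rw [lift2_PbarM_mul_apply (Fin.succ_ne_zero a).symm]
  simp [oneT, update_update_comp_succ, update_of_ne (Fin.succ_ne_zero a).symm]

theorem lift2_PbarM_mul_lift2_PbarM_mul_oneT {a b : Fin k} (hab : a ≠ b) (M : TMat (Fin k) n)
    (hM : ∀ h g, M (h ∘ Equiv.swap a b) g = -M h g) :
    lift2 0 a.succ (PbarM n) * (lift2 0 b.succ (PbarM n) * oneT n k M)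
      = -(lift2 0 a.succ (PbarM n) * oneT n k M) := by
  ext f g
  rw [Matrix.neg_apply, lift2_PbarM_mul_apply (Fin.succ_ne_zero a).symm,
    lift2_PbarM_mul_oneT_apply]
  have hba : b.succ ≠ a.succ := (Fin.succ_injective _).ne hab.symm
  simp [lift2_PbarM_mul_oneT_apply, update_update_comp_succ,
    update_of_ne (Fin.succ_ne_zero a).symm, update_of_ne hba,
    update_update_eq_update_comp_swap _ hab, hM]
  split_ifs <;> simp

end Antisymmetrizer

theorem prod_finRange_one_sub_inv_smul_mul {K R : Type*} [Field K] [Ring R] [Algebra K R]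
    {k : ℕ} (Q : Fin k → R) (A : R) {t x : K}
    (hQ : ∀ a b, a < b → Q a * (Q b * A) = -(Q a * A)) (hx : ∀ i : Fin k, x ≠ t + (i : ℕ)) :
    ((List.finRange k).map fun (j : Fin k) => 1 - (t + k - 1 - (j : ℕ) - x)⁻¹ • Q j).prod * A
      = (1 + (x - t)⁻¹ • ∑ j, Q j) * A := by
  induction k with
  | zero => simp
  | succ k ih =>
    have hrest := ih (fun j => Q j.succ) (fun a b hab => hQ _ _ (Fin.succ_lt_succ_iff.mpr hab))
      (fun i => hx i.castSucc)
    have hcoef_succ : ∀ j : Fin k, t + ((k + 1 : ℕ) : K) - 1 - (j.succ : ℕ) - x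
        = t + k - 1 - (j : ℕ) - x := fun j => by push_cast [Fin.val_succ]; ring
    have hcoef_zero : t + ((k + 1 : ℕ) : K) - 1 - ((0 : Fin (k + 1)) : ℕ) - x = t + k - x := by
      push_cast [Fin.val_zero]; ring
    have hS : Q 0 * ((∑ j : Fin k, Q j.succ) * A) = -(k : K) • (Q 0 * A) := by
      rw [Finset.sum_mul, Finset.mul_sum,
        Finset.sum_congr rfl fun j _ => hQ 0 j.succ (Fin.succ_pos j)]
      simp [← Nat.cast_smul_eq_nsmul K]
    have hy : x - t ≠ 0 := sub_ne_zero.mpr (by simpa using hx 0)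
    have hc : t + k - x ≠ 0 := fun h => hx (Fin.last k) (by simp; linear_combination -h)
    simp only [List.finRange_succ, List.map_cons, List.map_map, Function.comp_def, hcoef_succ,
      hcoef_zero, List.prod_cons]
    rw [mul_assoc, hrest, Fin.sum_univ_succ]
    simp only [sub_mul, add_mul, one_mul, smul_mul_assoc, mul_add, mul_smul_comm, hS]
    match_scalars
    · rfl
    · field_simp
      ring
    · rfl

theorem stmt9_general (n k : ℕ) (t x : ℂ)
    (hx : ∀ i : Fin k, x ≠ t + ((i : ℕ) : ℂ)) :
    ((List.finRange k).map (fun (j : Fin k) =>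
        lift2 (0 : Fin (k + 1)) j.succ (RbarM n (t + (k : ℂ) - 1 - ((j : ℕ) : ℂ) - x)))).prod *
      oneT n k (antisym n k)
  = (1 + (x - t)⁻¹ • ∑ j : Fin k, lift2 (0 : Fin (k + 1)) j.succ (PbarM n)) *
      oneT n k (antisym n k) := by
  have hRbar : ∀ j : Fin k, lift2 (0 : Fin (k + 1)) j.succ (RbarM n (t + k - 1 - (j : ℕ) - x))
      = 1 - (t + k - 1 - (j : ℕ) - x)⁻¹ • lift2 0 j.succ (PbarM n) :=
    fun j => lift2_RbarM (Fin.succ_ne_zero j).symm _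
  simp only [hRbar]
  exact prod_finRange_one_sub_inv_smul_mul _ _
    (fun a b hab => lift2_PbarM_mul_lift2_PbarM_mul_oneT hab.ne _ (antisym_apply_comp_swap hab.ne))
    hx

/-- `R̄₀₁(t+k−1−x) ⋯ R̄₀k(t−x) ∘ (1 ⊗ A_k) = (1 + (P̄₀₁ + ⋯ + P̄₀k)(x−t)⁻¹) ∘ (1 ⊗ A_k)`
on `(ℂⁿ)^{⊗(k+1)}` (factors labelled `0, 1, …, k`), for `x ∉ {t, …, t+k−1}`. -/
theorem stmt9 (n k : ℕ) (hk : 1 ≤ k) (hkn : k ≤ n) (t x : ℂ)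
    (hx : ∀ i : Fin k, x ≠ t + ((i : ℕ) : ℂ)) :
    ((List.finRange k).map (fun (j : Fin k) =>
        lift2 (0 : Fin (k + 1)) j.succ (RbarM n (t + (k : ℂ) - 1 - ((j : ℕ) : ℂ) - x)))).prod *
      oneT n k (antisym n k)
  = (1 + (x - t)⁻¹ • ∑ j : Fin k, lift2 (0 : Fin (k + 1)) j.succ (PbarM n)) *
      oneT n k (antisym n k) :=
  stmt9_general n k t x hx
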